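/- Let N ≥ 2 be an integer and let U : C_N → {0,1,2} be any colouring that agrees with the Dobrushin boundary colouring on all boundary lattice points of C_N. Consider all triangles of the form T = {v, v+e_a, v+e_a+e_b} with v ∈ C_N, a ≠ b ∈ {1,2,3} and e_1,e_2,e_3 the standard basis vectors, whose convex hull is contained in the frontier of the real cube [0,N]³ ⊆ ℝ³. Then exactly two such triangles are tricolour (U takes three distinct values on the vertices), namely f = {(0,0,0),(1,0,0),(1,0,1)} and f' = {(N,N,N),(N,N−1,N),(N,N−1,N−1)}. -/
import Mathlib


/-- The discrete cube `C_N = {0,…,N}³`, as a set of lattice points. -/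
def discreteCube (N : ℕ) : Set (Fin 3 → ℕ) := {x | ∀ i, x i ≤ N}

/-- The strict face `F^{(i)}_k` of `C_N`. -/
def strictFace (N : ℕ) (i : Fin 3) (k : ℕ) : Set (Fin 3 → ℕ) :=
  {x | x ∈ discreteCube N ∧ x i = k ∧ ∀ j, j ≠ i → 0 < x j ∧ x j < N}

/-- The strict edge `E^{(i,j)}_{k,l}` of `C_N`. -/
def strictEdge (N : ℕ) (i j : Fin 3) (k l : ℕ) : Set (Fin 3 → ℕ) :=
  {x | x ∈ discreteCube N ∧ x i = k ∧ x j = l ∧ ∀ m, m ≠ i → m ≠ j → 0 < x m ∧ x m < N}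

/-- The set of points of `C_N` coloured `0` by the Dobrushin boundary condition. -/
def dobrushin0 (N : ℕ) : Set (Fin 3 → ℕ) :=
  ({![0,0,0], ![0,N,0], ![0,0,N], ![N,N,0], ![0,N,N], ![N,N,N]} : Set (Fin 3 → ℕ)) ∪
    strictFace N 0 0 ∪ strictFace N 1 N ∪
    strictEdge N 1 2 N 0 ∪ strictEdge N 1 2 N N ∪ strictEdge N 0 2 0 N ∪
    strictEdge N 0 1 0 0 ∪ strictEdge N 0 1 0 N ∪ strictEdge N 0 1 N N

/-- The set of points of `C_N` coloured `1` by the Dobrushin boundary condition. -/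
def dobrushin1 (N : ℕ) : Set (Fin 3 → ℕ) :=
  ({![N,0,N]} : Set (Fin 3 → ℕ)) ∪ strictFace N 1 0 ∪ strictFace N 2 N ∪
    strictEdge N 1 2 0 N ∪ strictEdge N 0 2 N N

/-- The set of points of `C_N` coloured `2` by the Dobrushin boundary condition. -/
def dobrushin2 (N : ℕ) : Set (Fin 3 → ℕ) :=
  ({![N,0,0]} : Set (Fin 3 → ℕ)) ∪ strictFace N 0 N ∪ strictFace N 2 0 ∪
    strictEdge N 1 2 0 0 ∪ strictEdge N 0 2 0 0 ∪ strictEdge N 0 2 N 0 ∪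
    strictEdge N 0 1 N 0

/-- The canonical embedding of lattice points into `ℝ³`. -/
def toReal3 (x : Fin 3 → ℕ) : Fin 3 → ℝ := fun i => (x i : ℝ)

/-- `T` is a lattice triangle `{v, v+e_a, v+e_a+e_b}` (with `v ∈ C_N`, `a ≠ b`) whose
convex hull is contained in the frontier of the real cube `[0,N]³`. -/
def IsBoundaryTriangle (N : ℕ) (T : Set (Fin 3 → ℕ)) : Prop :=
  ∃ v ∈ discreteCube N, ∃ a b : Fin 3, a ≠ b ∧
    T = {v, v + Pi.single a 1, v + Pi.single a 1 + Pi.single b 1} ∧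
    convexHull ℝ (toReal3 '' T) ⊆ frontier {y : Fin 3 → ℝ | ∀ i, y i ∈ Set.Icc (0 : ℝ) N}

lemma eq3 {x : Fin 3 → ℕ} {a b c : ℕ} (h0 : x 0 = a) (h1 : x 1 = b) (h2 : x 2 = c) :
    x = ![a, b, c] := by
  funext j; fin_cases j <;> simpa using ‹_›

lemma fin3cases : ∀ y : Fin 3, y = 0 ∨ y = 1 ∨ y = 2 := by decide

lemma mem_face0 {N k : ℕ} {x : Fin 3 → ℕ} (hc : ∀ m, x m ≤ N) (h : x 0 = k)
    (h1 : 0 < x 1 ∧ x 1 < N) (h2 : 0 < x 2 ∧ x 2 < N) : x ∈ strictFace N 0 k := by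
  refine ⟨hc, h, fun j hj => ?_⟩
  rcases fin3cases j with rfl | rfl | rfl
  exacts [absurd rfl hj, h1, h2]

lemma mem_face1 {N k : ℕ} {x : Fin 3 → ℕ} (hc : ∀ m, x m ≤ N) (h : x 1 = k)
    (h0 : 0 < x 0 ∧ x 0 < N) (h2 : 0 < x 2 ∧ x 2 < N) : x ∈ strictFace N 1 k := by
  refine ⟨hc, h, fun j hj => ?_⟩
  rcases fin3cases j with rfl | rfl | rfl
  exacts [h0, absurd rfl hj, h2]

lemma mem_face2 {N k : ℕ} {x : Fin 3 → ℕ} (hc : ∀ m, x m ≤ N) (h : x 2 = k)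
    (h0 : 0 < x 0 ∧ x 0 < N) (h1 : 0 < x 1 ∧ x 1 < N) : x ∈ strictFace N 2 k := by
  refine ⟨hc, h, fun j hj => ?_⟩
  rcases fin3cases j with rfl | rfl | rfl
  exacts [h0, h1, absurd rfl hj]

lemma mem_edge01 {N k l : ℕ} {x : Fin 3 → ℕ} (hc : ∀ m, x m ≤ N) (ha : x 0 = k)
    (hb : x 1 = l) (h2 : 0 < x 2 ∧ x 2 < N) : x ∈ strictEdge N 0 1 k l := by
  refine ⟨hc, ha, hb, fun m hm0 hm1 => ?_⟩
  rcases fin3cases m with rfl | rfl | rfl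
  exacts [absurd rfl hm0, absurd rfl hm1, h2]

lemma mem_edge02 {N k l : ℕ} {x : Fin 3 → ℕ} (hc : ∀ m, x m ≤ N) (ha : x 0 = k)
    (hb : x 2 = l) (h1 : 0 < x 1 ∧ x 1 < N) : x ∈ strictEdge N 0 2 k l := by
  refine ⟨hc, ha, hb, fun m hm0 hm1 => ?_⟩
  rcases fin3cases m with rfl | rfl | rfl
  exacts [absurd rfl hm0, h1, absurd rfl hm1]

lemma mem_edge12 {N k l : ℕ} {x : Fin 3 → ℕ} (hc : ∀ m, x m ≤ N) (ha : x 1 = k)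
    (hb : x 2 = l) (h0 : 0 < x 0 ∧ x 0 < N) : x ∈ strictEdge N 1 2 k l := by
  refine ⟨hc, ha, hb, fun m hm0 hm1 => ?_⟩
  rcases fin3cases m with rfl | rfl | rfl
  exacts [h0, absurd rfl hm0, absurd rfl hm1]

lemma forall_fin3 {P : Fin 3 → Prop} : (∀ j : Fin 3, P j) ↔ P 0 ∧ P 1 ∧ P 2 :=
  ⟨fun h => ⟨h 0, h 1, h 2⟩, fun h j => by fin_cases j <;> tauto⟩

lemma mem_dob0 {N : ℕ} {x : Fin 3 → ℕ} (hN : 2 ≤ N) (hc : ∀ m, x m ≤ N)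
    (h : x 1 = N ∨ (x 0 = 0 ∧ ¬(0 < x 1 ∧ x 1 < N ∧ x 2 = 0))) : x ∈ dobrushin0 N := by
  have hc0 := hc 0; have hc1 := hc 1; have hc2 := hc 2
  have t0 : x 0 = 0 ∨ x 0 = N ∨ (0 < x 0 ∧ x 0 < N) := by omega
  have t1 : x 1 = 0 ∨ x 1 = N ∨ (0 < x 1 ∧ x 1 < N) := by omega
  have t2 : x 2 = 0 ∨ x 2 = N ∨ (0 < x 2 ∧ x 2 < N) := by omega
  rcases t0 with h0|h0|h0 <;> rcases t1 with h1|h1|h1 <;> rcases t2 with h2|h2|h2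
  · exact Set.mem_union_left _ (Set.mem_union_left _ (Set.mem_union_left _ (Set.mem_union_left _ (Set.mem_union_left _ (Set.mem_union_left _ (Set.mem_union_left _ (Set.mem_union_left _ (by rw [eq3 h0 h1 h2]; simp))))))))
  · exact Set.mem_union_left _ (Set.mem_union_left _ (Set.mem_union_left _ (Set.mem_union_left _ (Set.mem_union_left _ (Set.mem_union_left _ (Set.mem_union_left _ (Set.mem_union_left _ (by rw [eq3 h0 h1 h2]; simp))))))))
  · exact Set.mem_union_left _ (Set.mem_union_left _ (Set.mem_union_right _ (mem_edge01 hc h0 h1 h2)))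
  · exact Set.mem_union_left _ (Set.mem_union_left _ (Set.mem_union_left _ (Set.mem_union_left _ (Set.mem_union_left _ (Set.mem_union_left _ (Set.mem_union_left _ (Set.mem_union_left _ (by rw [eq3 h0 h1 h2]; simp))))))))
  · exact Set.mem_union_left _ (Set.mem_union_left _ (Set.mem_union_left _ (Set.mem_union_left _ (Set.mem_union_left _ (Set.mem_union_left _ (Set.mem_union_left _ (Set.mem_union_left _ (by rw [eq3 h0 h1 h2]; simp))))))))
  · exact Set.mem_union_left _ (Set.mem_union_right _ (mem_edge01 hc h0 h1 h2))
  · exfalso; omega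
  · exact Set.mem_union_left _ (Set.mem_union_left _ (Set.mem_union_left _ (Set.mem_union_right _ (mem_edge02 hc h0 h2 h1))))
  · exact Set.mem_union_left _ (Set.mem_union_left _ (Set.mem_union_left _ (Set.mem_union_left _ (Set.mem_union_left _ (Set.mem_union_left _ (Set.mem_union_left _ (Set.mem_union_right _ (mem_face0 hc h0 h1 h2))))))))
  · exfalso; omega
  · exfalso; omega
  · exfalso; omega
  · exact Set.mem_union_left _ (Set.mem_union_left _ (Set.mem_union_left _ (Set.mem_union_left _ (Set.mem_union_left _ (Set.mem_union_left _ (Set.mem_union_left _ (Set.mem_union_left _ (by rw [eq3 h0 h1 h2]; simp))))))))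
  · exact Set.mem_union_left _ (Set.mem_union_left _ (Set.mem_union_left _ (Set.mem_union_left _ (Set.mem_union_left _ (Set.mem_union_left _ (Set.mem_union_left _ (Set.mem_union_left _ (by rw [eq3 h0 h1 h2]; simp))))))))
  · exact Set.mem_union_right _ (mem_edge01 hc h0 h1 h2)
  · exfalso; omega
  · exfalso; omega
  · exfalso; omega
  · exfalso; omega
  · exfalso; omega
  · exfalso; omega
  · exact Set.mem_union_left _ (Set.mem_union_left _ (Set.mem_union_left _ (Set.mem_union_left _ (Set.mem_union_left _ (Set.mem_union_right _ (mem_edge12 hc h1 h2 h0))))))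
  · exact Set.mem_union_left _ (Set.mem_union_left _ (Set.mem_union_left _ (Set.mem_union_left _ (Set.mem_union_right _ (mem_edge12 hc h1 h2 h0)))))
  · exact Set.mem_union_left _ (Set.mem_union_left _ (Set.mem_union_left _ (Set.mem_union_left _ (Set.mem_union_left _ (Set.mem_union_left _ (Set.mem_union_right _ (mem_face1 hc h1 h0 h2)))))))
  · exfalso; omega
  · exfalso; omega
  · exfalso; omega

lemma mem_dob1 {N : ℕ} {x : Fin 3 → ℕ} (hN : 2 ≤ N) (hc : ∀ m, x m ≤ N)
    (h : (0 < x 0 ∧ x 0 < N ∧ x 1 = 0 ∧ 0 < x 2 ∧ x 2 < N) ∨ (x 2 = N ∧ 0 < x 0 ∧ x 1 < N)) : x ∈ dobrushin1 N := by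
  have hc0 := hc 0; have hc1 := hc 1; have hc2 := hc 2
  have t0 : x 0 = 0 ∨ x 0 = N ∨ (0 < x 0 ∧ x 0 < N) := by omega
  have t1 : x 1 = 0 ∨ x 1 = N ∨ (0 < x 1 ∧ x 1 < N) := by omega
  have t2 : x 2 = 0 ∨ x 2 = N ∨ (0 < x 2 ∧ x 2 < N) := by omega
  rcases t0 with h0|h0|h0 <;> rcases t1 with h1|h1|h1 <;> rcases t2 with h2|h2|h2
  · exfalso; omega
  · exfalso; omega
  · exfalso; omega
  · exfalso; omega
  · exfalso; omega
  · exfalso; omega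
  · exfalso; omega
  · exfalso; omega
  · exfalso; omega
  · exfalso; omega
  · exact Set.mem_union_left _ (Set.mem_union_left _ (Set.mem_union_left _ (Set.mem_union_left _ (by rw [eq3 h0 h1 h2]; simp))))
  · exfalso; omega
  · exfalso; omega
  · exfalso; omega
  · exfalso; omega
  · exfalso; omega
  · exact Set.mem_union_right _ (mem_edge02 hc h0 h2 h1)
  · exfalso; omega
  · exfalso; omega
  · exact Set.mem_union_left _ (Set.mem_union_right _ (mem_edge12 hc h1 h2 h0))
  · exact Set.mem_union_left _ (Set.mem_union_left _ (Set.mem_union_left _ (Set.mem_union_right _ (mem_face1 hc h1 h0 h2))))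
  · exfalso; omega
  · exfalso; omega
  · exfalso; omega
  · exfalso; omega
  · exact Set.mem_union_left _ (Set.mem_union_left _ (Set.mem_union_right _ (mem_face2 hc h2 h0 h1)))
  · exfalso; omega

lemma mem_dob2 {N : ℕ} {x : Fin 3 → ℕ} (hN : 2 ≤ N) (hc : ∀ m, x m ≤ N)
    (h : (x 2 = 0 ∧ x 1 < N ∧ ¬(x 0 = 0 ∧ x 1 = 0)) ∨ (x 0 = N ∧ x 1 < N ∧ 0 < x 2 ∧ x 2 < N)) : x ∈ dobrushin2 N := by
  have hc0 := hc 0; have hc1 := hc 1; have hc2 := hc 2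
  have t0 : x 0 = 0 ∨ x 0 = N ∨ (0 < x 0 ∧ x 0 < N) := by omega
  have t1 : x 1 = 0 ∨ x 1 = N ∨ (0 < x 1 ∧ x 1 < N) := by omega
  have t2 : x 2 = 0 ∨ x 2 = N ∨ (0 < x 2 ∧ x 2 < N) := by omega
  rcases t0 with h0|h0|h0 <;> rcases t1 with h1|h1|h1 <;> rcases t2 with h2|h2|h2
  · exfalso; omega
  · exfalso; omega
  · exfalso; omega
  · exfalso; omega
  · exfalso; omega
  · exfalso; omega
  · exact Set.mem_union_left _ (Set.mem_union_left _ (Set.mem_union_right _ (mem_edge02 hc h0 h2 h1)))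
  · exfalso; omega
  · exfalso; omega
  · exact Set.mem_union_left _ (Set.mem_union_left _ (Set.mem_union_left _ (Set.mem_union_left _ (Set.mem_union_left _ (Set.mem_union_left _ (by rw [eq3 h0 h1 h2]; simp))))))
  · exfalso; omega
  · exact Set.mem_union_right _ (mem_edge01 hc h0 h1 h2)
  · exfalso; omega
  · exfalso; omega
  · exfalso; omega
  · exact Set.mem_union_left _ (Set.mem_union_right _ (mem_edge02 hc h0 h2 h1))
  · exfalso; omega
  · exact Set.mem_union_left _ (Set.mem_union_left _ (Set.mem_union_left _ (Set.mem_union_left _ (Set.mem_union_left _ (Set.mem_union_right _ (mem_face0 hc h0 h1 h2))))))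
  · exact Set.mem_union_left _ (Set.mem_union_left _ (Set.mem_union_left _ (Set.mem_union_right _ (mem_edge12 hc h1 h2 h0))))
  · exfalso; omega
  · exfalso; omega
  · exfalso; omega
  · exfalso; omega
  · exfalso; omega
  · exact Set.mem_union_left _ (Set.mem_union_left _ (Set.mem_union_left _ (Set.mem_union_left _ (Set.mem_union_right _ (mem_face2 hc h2 h0 h1)))))
  · exfalso; omega
  · exfalso; omega

/-- The Dobrushin colour of a boundary point, as a function of its coordinates. -/
def dcolF (N x y z : ℕ) : Fin 3 :=
  if y = N then 0
  else if x = 0 then (if ¬(y = 0) ∧ z = 0 then 2 else 0)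
  else if x = N then (if z = N then 1 else 2)
  else if z = 0 then 2 else 1

lemma U_eq {N : ℕ} (hN : 2 ≤ N) {U : (Fin 3 → ℕ) → Fin 3}
    (h0 : ∀ x ∈ dobrushin0 N, U x = 0)
    (h1 : ∀ x ∈ dobrushin1 N, U x = 1)
    (h2 : ∀ x ∈ dobrushin2 N, U x = 2)
    (x : Fin 3 → ℕ) (hc : ∀ m, x m ≤ N)
    (hb : x 0 = 0 ∨ x 0 = N ∨ x 1 = 0 ∨ x 1 = N ∨ x 2 = 0 ∨ x 2 = N) :
    U x = dcolF N (x 0) (x 1) (x 2) := by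
  have hc0 := hc 0; have hc1 := hc 1; have hc2 := hc 2
  unfold dcolF
  split_ifs with e1 e2 e3 e4 e5 e6
  · exact h0 x (mem_dob0 hN hc (by omega))
  · exact h2 x (mem_dob2 hN hc (by omega))
  · exact h0 x (mem_dob0 hN hc (by omega))
  · exact h1 x (mem_dob1 hN hc (by omega))
  · exact h2 x (mem_dob2 hN hc (by omega))
  · exact h2 x (mem_dob2 hN hc (by omega))
  · exact h1 x (mem_dob1 hN hc (by omega))

lemma cover {U : (Fin 3 → ℕ) → Fin 3} {p q r : Fin 3 → ℕ}
    (h : U '' ({p, q, r} : Set (Fin 3 → ℕ)) = Set.univ) :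
    ∀ t : Fin 3, t = U p ∨ t = U q ∨ t = U r := by
  intro t
  have ht : t ∈ U '' ({p, q, r} : Set (Fin 3 → ℕ)) := h ▸ Set.mem_univ t
  rcases ht with ⟨s, hs, rfl⟩
  rcases hs with rfl | rfl | rfl
  · exact Or.inl rfl
  · exact Or.inr (Or.inl rfl)
  · exact Or.inr (Or.inr rfl)

lemma cube_eq_pi (N : ℕ) :
    {y : Fin 3 → ℝ | ∀ i, y i ∈ Set.Icc (0 : ℝ) N} =
      Set.pi Set.univ (fun _ : Fin 3 => Set.Icc (0 : ℝ) N) := by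
  ext y; simp only [Set.mem_setOf_eq, Set.mem_univ_pi]

lemma cube_closed (N : ℕ) : IsClosed {y : Fin 3 → ℝ | ∀ i, y i ∈ Set.Icc (0 : ℝ) N} := by
  rw [cube_eq_pi]
  exact isClosed_set_pi fun i _ => isClosed_Icc

lemma interior_cube (N : ℕ) :
    interior {y : Fin 3 → ℝ | ∀ i, y i ∈ Set.Icc (0 : ℝ) N} =
      {y : Fin 3 → ℝ | ∀ i, y i ∈ Set.Ioo (0 : ℝ) N} := by
  rw [cube_eq_pi, interior_pi_set Set.finite_univ]
  ext y; simp only [Set.mem_setOf_eq, Set.mem_univ_pi, Function.comp, interior_Icc]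

lemma frontier_cube (N : ℕ) :
    frontier {y : Fin 3 → ℝ | ∀ i, y i ∈ Set.Icc (0 : ℝ) N} =
      {y : Fin 3 → ℝ | ∀ i, y i ∈ Set.Icc (0 : ℝ) N} \
        {y : Fin 3 → ℝ | ∀ i, y i ∈ Set.Ioo (0 : ℝ) N} := by
  rw [(cube_closed N).frontier_eq, interior_cube]

lemma subset_frontier {N : ℕ} (c : Fin 3) (k : ℕ) (hk : k = 0 ∨ k = N)
    (S : Set (Fin 3 → ℕ)) (hS : ∀ x ∈ S, (∀ i, x i ≤ N) ∧ x c = k) :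
    convexHull ℝ (toReal3 '' S) ⊆
      frontier {y : Fin 3 → ℝ | ∀ i, y i ∈ Set.Icc (0 : ℝ) N} := by
  set K : Set (Fin 3 → ℝ) :=
    {y | (∀ i, y i ∈ Set.Icc (0 : ℝ) N) ∧ y c = k} with hK
  have hk1 : Convex ℝ K := by
    intro x hx y hy a b ha hb hab
    refine ⟨fun i => ?_, ?_⟩
    · have h1 := (hx.1 i); have h2 := (hy.1 i)
      simp only [Set.mem_Icc, Pi.add_apply, Pi.smul_apply, smul_eq_mul] at h1 h2 ⊢
      constructor
      · nlinarith [h1.1, h2.1]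
      · nlinarith [h1.2, h2.2]
    · simp only [Pi.add_apply, Pi.smul_apply, smul_eq_mul]
      rw [hx.2, hy.2]
      linear_combination (k : ℝ) * hab
  have hsub : toReal3 '' S ⊆ K := by
    rintro _ ⟨x, hx, rfl⟩
    obtain ⟨hcube, hxc⟩ := hS x hx
    refine ⟨fun i => ?_, ?_⟩
    · simp only [toReal3, Set.mem_Icc]
      exact ⟨by positivity, by exact_mod_cast hcube i⟩
    · simp [toReal3, hxc]
  refine (convexHull_min hsub hk1).trans ?_
  intro y hy
  rw [frontier_cube]
  refine ⟨hy.1, fun hint => ?_⟩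
  have := hint c
  rw [hy.2] at this
  rcases hk with rfl | rfl
  · exact lt_irrefl _ (by exact_mod_cast this.1)
  · exact lt_irrefl _ (by exact_mod_cast this.2)

lemma triangle_data {N : ℕ} (v : Fin 3 → ℕ) (a b : Fin 3) (hab : a ≠ b)
    (hhull : convexHull ℝ (toReal3 ''
        ({v, v + Pi.single a 1, v + Pi.single a 1 + Pi.single b 1} : Set (Fin 3 → ℕ))) ⊆
      frontier {y : Fin 3 → ℝ | ∀ i, y i ∈ Set.Icc (0 : ℝ) N}) :
    (∀ i, v i ≤ N) ∧ v a + 1 ≤ N ∧ v b + 1 ≤ N ∧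
      ∀ i, i ≠ a → i ≠ b → v i = 0 ∨ v i = N := by
  set r : Fin 3 → ℕ := v + Pi.single a 1 + Pi.single b 1 with hr
  have hra : r a = v a + 1 := by
    simp [hr, Pi.single_apply, hab, Ne.symm hab]
  have hrb : r b = v b + 1 := by
    simp [hr, Pi.single_apply, hab, Ne.symm hab]
  have hrother : ∀ i, i ≠ a → i ≠ b → r i = v i := by
    intro i hia hib
    simp [hr, Pi.single_apply, hia, hib]
  have hfs : frontier {y : Fin 3 → ℝ | ∀ i, y i ∈ Set.Icc (0 : ℝ) N} ⊆
      {y : Fin 3 → ℝ | ∀ i, y i ∈ Set.Icc (0 : ℝ) N} := by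
    rw [frontier_cube]; exact Set.diff_subset
  have hvmem : toReal3 v ∈ convexHull ℝ (toReal3 ''
      ({v, v + Pi.single a 1, v + Pi.single a 1 + Pi.single b 1} : Set (Fin 3 → ℕ))) :=
    subset_convexHull ℝ _ ⟨v, by simp, rfl⟩
  have hrmem : toReal3 r ∈ convexHull ℝ (toReal3 ''
      ({v, v + Pi.single a 1, v + Pi.single a 1 + Pi.single b 1} : Set (Fin 3 → ℕ))) :=
    subset_convexHull ℝ _ ⟨r, by right; right; rfl, rfl⟩
  have hvcube : ∀ i, v i ≤ N := by
    intro i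
    have := (hfs (hhull hvmem)) i
    simp only [toReal3, Set.mem_Icc] at this
    exact_mod_cast this.2
  have hrcube : ∀ i, r i ≤ N := by
    intro i
    have := (hfs (hhull hrmem)) i
    simp only [toReal3, Set.mem_Icc] at this
    exact_mod_cast this.2
  have hva : v a + 1 ≤ N := hra ▸ hrcube a
  have hvb : v b + 1 ≤ N := hrb ▸ hrcube b
  refine ⟨hvcube, hva, hvb, ?_⟩
  intro i hia hib
  -- midpoint of v and r
  have hmid : (1/2 : ℝ) • toReal3 v + (1/2 : ℝ) • toReal3 r ∈ convexHull ℝ (toReal3 ''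
      ({v, v + Pi.single a 1, v + Pi.single a 1 + Pi.single b 1} : Set (Fin 3 → ℕ))) :=
    (convex_convexHull ℝ _) hvmem hrmem (by norm_num) (by norm_num) (by norm_num)
  have hfr := hhull hmid
  rw [frontier_cube] at hfr
  obtain ⟨-, hnint⟩ := hfr
  simp only [Set.mem_setOf_eq, not_forall] at hnint
  obtain ⟨j, hj⟩ := hnint
  have hmj : ∀ m : Fin 3, ((1/2 : ℝ) • toReal3 v + (1/2 : ℝ) • toReal3 r) m
      = ((v m : ℝ) + (r m : ℝ)) / 2 := by
    intro m
    simp [toReal3, Pi.add_apply, Pi.smul_apply, smul_eq_mul]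
    ring
  have hja : j ≠ a := by
    rintro rfl
    apply hj
    rw [hmj, hra]
    have h1 : (0 : ℝ) ≤ (v j : ℝ) := by positivity
    have h2 : (v j : ℝ) + 1 ≤ N := by exact_mod_cast hva
    constructor
    · push_cast; linarith
    · push_cast; linarith
  have hjb : j ≠ b := by
    rintro rfl
    apply hj
    rw [hmj, hrb]
    have h1 : (0 : ℝ) ≤ (v j : ℝ) := by positivity
    have h2 : (v j : ℝ) + 1 ≤ N := by exact_mod_cast hvb
    constructor
    · push_cast; linarith
    · push_cast; linarith
  have hij : i = j := by
    have ha3 := a.isLt; have hb3 := b.isLt; have hi3 := i.isLt; have hj3 := j.isLt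
    simp only [ne_eq, Fin.ext_iff] at hab hia hib hja hjb ⊢
    omega
  subst hij
  rw [hmj, hrother i hia hib] at hj
  simp only [Set.mem_Ioo, not_and_or, not_lt] at hj
  have hiN := hvcube i
  rcases hj with hj | hj
  · left
    have h' : (v i : ℝ) ≤ 0 := by linarith
    have : v i ≤ 0 := by exact_mod_cast h'
    omega
  · right
    have : (N : ℝ) ≤ (v i : ℝ) := by linarith
    have : N ≤ v i := by exact_mod_cast this
    omega

lemma finish_f (v : Fin 3 → ℕ) (h0 : v 0 = 0) (h1 : v 1 = 0) (h2 : v 2 = 0) :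
    ({v, v + Pi.single 0 1, v + Pi.single 0 1 + Pi.single 2 1} : Set (Fin 3 → ℕ)) =
      {![0,0,0], ![1,0,0], ![1,0,1]} := by
  have hv : v = ![0,0,0] := eq3 h0 h1 h2
  subst hv
  have g1 : (![0,0,0] : Fin 3 → ℕ) + Pi.single 0 1 = ![1,0,0] := by
    funext i; fin_cases i <;> simp [Pi.single_apply]
  have g2 : (![1,0,0] : Fin 3 → ℕ) + Pi.single 2 1 = ![1,0,1] := by
    funext i; fin_cases i <;> simp [Pi.single_apply]
  rw [g1, g2]

lemma finish_f' (N : ℕ) (hN : 2 ≤ N) (v : Fin 3 → ℕ) (h0 : v 0 = N)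
    (h1 : v 1 + 1 = N) (h2 : v 2 + 1 = N) :
    ({v, v + Pi.single 2 1, v + Pi.single 2 1 + Pi.single 1 1} : Set (Fin 3 → ℕ)) =
      {![N,N,N], ![N,N-1,N], ![N,N-1,N-1]} := by
  have hv : v = ![N, N-1, N-1] := eq3 h0 (by omega) (by omega)
  subst hv
  have g1 : (![N,N-1,N-1] : Fin 3 → ℕ) + Pi.single 2 1 = ![N,N-1,N] := by
    funext i; fin_cases i <;> simp [Pi.single_apply] <;> omega
  have g2 : (![N,N-1,N] : Fin 3 → ℕ) + Pi.single 1 1 = ![N,N,N] := by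
    funext i; fin_cases i <;> simp [Pi.single_apply] <;> omega
  rw [g1, g2]
  ext x
  simp only [Set.mem_insert_iff, Set.mem_singleton_iff]
  tauto

set_option maxHeartbeats 4000000 in
/-- For `N ≥ 2`, if a colouring `U` of `C_N` agrees with the Dobrushin boundary
colouring on all boundary lattice points, then exactly two boundary triangles are
tricolour, namely `f = {(0,0,0),(1,0,0),(1,0,1)}` and
`f' = {(N,N,N),(N,N−1,N),(N,N−1,N−1)}`. -/
theorem tricolour_boundary_triangles (N : ℕ) (hN : 2 ≤ N) (U : (Fin 3 → ℕ) → Fin 3)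
    (h0 : ∀ x ∈ dobrushin0 N, U x = 0)
    (h1 : ∀ x ∈ dobrushin1 N, U x = 1)
    (h2 : ∀ x ∈ dobrushin2 N, U x = 2) :
    {T : Set (Fin 3 → ℕ) | IsBoundaryTriangle N T ∧ U '' T = Set.univ} =
      {({![0,0,0], ![1,0,0], ![1,0,1]} : Set (Fin 3 → ℕ)),
       ({![N,N,N], ![N,N-1,N], ![N,N-1,N-1]} : Set (Fin 3 → ℕ))} := by
  ext T
  simp only [Set.mem_setOf_eq, Set.mem_insert_iff, Set.mem_singleton_iff]
  constructor
  · rintro ⟨hbt, himg⟩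
    unfold IsBoundaryTriangle at hbt
    obtain ⟨v, hv, a, b, hab, rfl, hhull⟩ := hbt
    obtain ⟨hcube, hva, hvb, hthird⟩ := triangle_data v a b hab hhull
    have hcb0 := hcube 0; have hcb1 := hcube 1; have hcb2 := hcube 2
    have hcov := cover himg
    have hfin : ∀ x : Fin 3, x = 0 ∨ x = 1 ∨ x = 2 := by decide
    rcases hfin a with rfl | rfl | rfl <;> rcases hfin b with rfl | rfl | rfl <;>
      (try exact absurd rfl hab)
    · -- case a = 0, b = 1
      have hk := hthird 2 (by decide) (by decide)
      have eq0 : (v + (Pi.single (0 : Fin 3) 1 : Fin 3 → ℕ)) 0 = ((v 0) + 1) := by simp [Pi.single_apply]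
      have eq1 : (v + (Pi.single (0 : Fin 3) 1 : Fin 3 → ℕ)) 1 = (v 1) := by simp [Pi.single_apply]
      have eq2 : (v + (Pi.single (0 : Fin 3) 1 : Fin 3 → ℕ)) 2 = (v 2) := by simp [Pi.single_apply]
      have er0 : (v + (Pi.single (0 : Fin 3) 1 : Fin 3 → ℕ) + (Pi.single (1 : Fin 3) 1 : Fin 3 → ℕ)) 0 = ((v 0) + 1) := by simp [Pi.single_apply]
      have er1 : (v + (Pi.single (0 : Fin 3) 1 : Fin 3 → ℕ) + (Pi.single (1 : Fin 3) 1 : Fin 3 → ℕ)) 1 = ((v 1) + 1) := by simp [Pi.single_apply]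
      have er2 : (v + (Pi.single (0 : Fin 3) 1 : Fin 3 → ℕ) + (Pi.single (1 : Fin 3) 1 : Fin 3 → ℕ)) 2 = (v 2) := by simp [Pi.single_apply]
      have hUp : U v = dcolF N (v 0) (v 1) (v 2) :=
        U_eq hN h0 h1 h2 v hcube (by omega)
      have hUq : U (v + (Pi.single (0 : Fin 3) 1 : Fin 3 → ℕ)) = dcolF N ((v 0) + 1) (v 1) (v 2) := by
        rw [U_eq hN h0 h1 h2 _ (fun m => by rcases fin3cases m with rfl | rfl | rfl <;> simp [Pi.single_apply] <;> omega)
          (by rw [eq0, eq1, eq2]; omega), eq0, eq1, eq2]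
      have hUr : U (v + (Pi.single (0 : Fin 3) 1 : Fin 3 → ℕ) + (Pi.single (1 : Fin 3) 1 : Fin 3 → ℕ)) = dcolF N ((v 0) + 1) ((v 1) + 1) (v 2) := by
        rw [U_eq hN h0 h1 h2 _ (fun m => by rcases fin3cases m with rfl | rfl | rfl <;> simp [Pi.single_apply] <;> omega)
          (by rw [er0, er1, er2]; omega), er0, er1, er2]
      have c0 := hcov 0; have c1 := hcov 1; have c2 := hcov 2
      rw [hUp, hUq, hUr] at c0 c1 c2
      clear hcov hUp hUq hUr himg hhull
      simp only [dcolF] at c0 c1 c2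
      split_ifs at c0 c1 c2 <;>
        first
        | exact absurd c0 (by decide)
        | exact absurd c1 (by decide)
        | exact absurd c2 (by decide)
        | (exfalso; omega)
        | contradiction
        | (left; exact finish_f v (by omega) (by omega) (by omega))
        | (right; exact finish_f' N hN v (by omega) (by omega) (by omega))
    · -- case a = 0, b = 2
      have hk := hthird 1 (by decide) (by decide)
      have eq0 : (v + (Pi.single (0 : Fin 3) 1 : Fin 3 → ℕ)) 0 = ((v 0) + 1) := by simp [Pi.single_apply]
      have eq1 : (v + (Pi.single (0 : Fin 3) 1 : Fin 3 → ℕ)) 1 = (v 1) := by simp [Pi.single_apply]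
      have eq2 : (v + (Pi.single (0 : Fin 3) 1 : Fin 3 → ℕ)) 2 = (v 2) := by simp [Pi.single_apply]
      have er0 : (v + (Pi.single (0 : Fin 3) 1 : Fin 3 → ℕ) + (Pi.single (2 : Fin 3) 1 : Fin 3 → ℕ)) 0 = ((v 0) + 1) := by simp [Pi.single_apply]
      have er1 : (v + (Pi.single (0 : Fin 3) 1 : Fin 3 → ℕ) + (Pi.single (2 : Fin 3) 1 : Fin 3 → ℕ)) 1 = (v 1) := by simp [Pi.single_apply]
      have er2 : (v + (Pi.single (0 : Fin 3) 1 : Fin 3 → ℕ) + (Pi.single (2 : Fin 3) 1 : Fin 3 → ℕ)) 2 = ((v 2) + 1) := by simp [Pi.single_apply]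
      have hUp : U v = dcolF N (v 0) (v 1) (v 2) :=
        U_eq hN h0 h1 h2 v hcube (by omega)
      have hUq : U (v + (Pi.single (0 : Fin 3) 1 : Fin 3 → ℕ)) = dcolF N ((v 0) + 1) (v 1) (v 2) := by
        rw [U_eq hN h0 h1 h2 _ (fun m => by rcases fin3cases m with rfl | rfl | rfl <;> simp [Pi.single_apply] <;> omega)
          (by rw [eq0, eq1, eq2]; omega), eq0, eq1, eq2]
      have hUr : U (v + (Pi.single (0 : Fin 3) 1 : Fin 3 → ℕ) + (Pi.single (2 : Fin 3) 1 : Fin 3 → ℕ)) = dcolF N ((v 0) + 1) (v 1) ((v 2) + 1) := by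
        rw [U_eq hN h0 h1 h2 _ (fun m => by rcases fin3cases m with rfl | rfl | rfl <;> simp [Pi.single_apply] <;> omega)
          (by rw [er0, er1, er2]; omega), er0, er1, er2]
      have c0 := hcov 0; have c1 := hcov 1; have c2 := hcov 2
      rw [hUp, hUq, hUr] at c0 c1 c2
      clear hcov hUp hUq hUr himg hhull
      simp only [dcolF] at c0 c1 c2
      split_ifs at c0 c1 c2 <;>
        first
        | exact absurd c0 (by decide)
        | exact absurd c1 (by decide)
        | exact absurd c2 (by decide)
        | (exfalso; omega)
        | contradiction
        | (left; exact finish_f v (by omega) (by omega) (by omega))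
        | (right; exact finish_f' N hN v (by omega) (by omega) (by omega))
    · -- case a = 1, b = 0
      have hk := hthird 2 (by decide) (by decide)
      have eq0 : (v + (Pi.single (1 : Fin 3) 1 : Fin 3 → ℕ)) 0 = (v 0) := by simp [Pi.single_apply]
      have eq1 : (v + (Pi.single (1 : Fin 3) 1 : Fin 3 → ℕ)) 1 = ((v 1) + 1) := by simp [Pi.single_apply]
      have eq2 : (v + (Pi.single (1 : Fin 3) 1 : Fin 3 → ℕ)) 2 = (v 2) := by simp [Pi.single_apply]
      have er0 : (v + (Pi.single (1 : Fin 3) 1 : Fin 3 → ℕ) + (Pi.single (0 : Fin 3) 1 : Fin 3 → ℕ)) 0 = ((v 0) + 1) := by simp [Pi.single_apply]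
      have er1 : (v + (Pi.single (1 : Fin 3) 1 : Fin 3 → ℕ) + (Pi.single (0 : Fin 3) 1 : Fin 3 → ℕ)) 1 = ((v 1) + 1) := by simp [Pi.single_apply]
      have er2 : (v + (Pi.single (1 : Fin 3) 1 : Fin 3 → ℕ) + (Pi.single (0 : Fin 3) 1 : Fin 3 → ℕ)) 2 = (v 2) := by simp [Pi.single_apply]
      have hUp : U v = dcolF N (v 0) (v 1) (v 2) :=
        U_eq hN h0 h1 h2 v hcube (by omega)
      have hUq : U (v + (Pi.single (1 : Fin 3) 1 : Fin 3 → ℕ)) = dcolF N (v 0) ((v 1) + 1) (v 2) := by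
        rw [U_eq hN h0 h1 h2 _ (fun m => by rcases fin3cases m with rfl | rfl | rfl <;> simp [Pi.single_apply] <;> omega)
          (by rw [eq0, eq1, eq2]; omega), eq0, eq1, eq2]
      have hUr : U (v + (Pi.single (1 : Fin 3) 1 : Fin 3 → ℕ) + (Pi.single (0 : Fin 3) 1 : Fin 3 → ℕ)) = dcolF N ((v 0) + 1) ((v 1) + 1) (v 2) := by
        rw [U_eq hN h0 h1 h2 _ (fun m => by rcases fin3cases m with rfl | rfl | rfl <;> simp [Pi.single_apply] <;> omega)
          (by rw [er0, er1, er2]; omega), er0, er1, er2]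
      have c0 := hcov 0; have c1 := hcov 1; have c2 := hcov 2
      rw [hUp, hUq, hUr] at c0 c1 c2
      clear hcov hUp hUq hUr himg hhull
      simp only [dcolF] at c0 c1 c2
      split_ifs at c0 c1 c2 <;>
        first
        | exact absurd c0 (by decide)
        | exact absurd c1 (by decide)
        | exact absurd c2 (by decide)
        | (exfalso; omega)
        | contradiction
        | (left; exact finish_f v (by omega) (by omega) (by omega))
        | (right; exact finish_f' N hN v (by omega) (by omega) (by omega))
    · -- case a = 1, b = 2
      have hk := hthird 0 (by decide) (by decide)
      have eq0 : (v + (Pi.single (1 : Fin 3) 1 : Fin 3 → ℕ)) 0 = (v 0) := by simp [Pi.single_apply]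
      have eq1 : (v + (Pi.single (1 : Fin 3) 1 : Fin 3 → ℕ)) 1 = ((v 1) + 1) := by simp [Pi.single_apply]
      have eq2 : (v + (Pi.single (1 : Fin 3) 1 : Fin 3 → ℕ)) 2 = (v 2) := by simp [Pi.single_apply]
      have er0 : (v + (Pi.single (1 : Fin 3) 1 : Fin 3 → ℕ) + (Pi.single (2 : Fin 3) 1 : Fin 3 → ℕ)) 0 = (v 0) := by simp [Pi.single_apply]
      have er1 : (v + (Pi.single (1 : Fin 3) 1 : Fin 3 → ℕ) + (Pi.single (2 : Fin 3) 1 : Fin 3 → ℕ)) 1 = ((v 1) + 1) := by simp [Pi.single_apply]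
      have er2 : (v + (Pi.single (1 : Fin 3) 1 : Fin 3 → ℕ) + (Pi.single (2 : Fin 3) 1 : Fin 3 → ℕ)) 2 = ((v 2) + 1) := by simp [Pi.single_apply]
      have hUp : U v = dcolF N (v 0) (v 1) (v 2) :=
        U_eq hN h0 h1 h2 v hcube (by omega)
      have hUq : U (v + (Pi.single (1 : Fin 3) 1 : Fin 3 → ℕ)) = dcolF N (v 0) ((v 1) + 1) (v 2) := by
        rw [U_eq hN h0 h1 h2 _ (fun m => by rcases fin3cases m with rfl | rfl | rfl <;> simp [Pi.single_apply] <;> omega)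
          (by rw [eq0, eq1, eq2]; omega), eq0, eq1, eq2]
      have hUr : U (v + (Pi.single (1 : Fin 3) 1 : Fin 3 → ℕ) + (Pi.single (2 : Fin 3) 1 : Fin 3 → ℕ)) = dcolF N (v 0) ((v 1) + 1) ((v 2) + 1) := by
        rw [U_eq hN h0 h1 h2 _ (fun m => by rcases fin3cases m with rfl | rfl | rfl <;> simp [Pi.single_apply] <;> omega)
          (by rw [er0, er1, er2]; omega), er0, er1, er2]
      have c0 := hcov 0; have c1 := hcov 1; have c2 := hcov 2
      rw [hUp, hUq, hUr] at c0 c1 c2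
      clear hcov hUp hUq hUr himg hhull
      simp only [dcolF] at c0 c1 c2
      split_ifs at c0 c1 c2 <;>
        first
        | exact absurd c0 (by decide)
        | exact absurd c1 (by decide)
        | exact absurd c2 (by decide)
        | (exfalso; omega)
        | contradiction
        | (left; exact finish_f v (by omega) (by omega) (by omega))
        | (right; exact finish_f' N hN v (by omega) (by omega) (by omega))
    · -- case a = 2, b = 0
      have hk := hthird 1 (by decide) (by decide)
      have eq0 : (v + (Pi.single (2 : Fin 3) 1 : Fin 3 → ℕ)) 0 = (v 0) := by simp [Pi.single_apply]
      have eq1 : (v + (Pi.single (2 : Fin 3) 1 : Fin 3 → ℕ)) 1 = (v 1) := by simp [Pi.single_apply]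
      have eq2 : (v + (Pi.single (2 : Fin 3) 1 : Fin 3 → ℕ)) 2 = ((v 2) + 1) := by simp [Pi.single_apply]
      have er0 : (v + (Pi.single (2 : Fin 3) 1 : Fin 3 → ℕ) + (Pi.single (0 : Fin 3) 1 : Fin 3 → ℕ)) 0 = ((v 0) + 1) := by simp [Pi.single_apply]
      have er1 : (v + (Pi.single (2 : Fin 3) 1 : Fin 3 → ℕ) + (Pi.single (0 : Fin 3) 1 : Fin 3 → ℕ)) 1 = (v 1) := by simp [Pi.single_apply]
      have er2 : (v + (Pi.single (2 : Fin 3) 1 : Fin 3 → ℕ) + (Pi.single (0 : Fin 3) 1 : Fin 3 → ℕ)) 2 = ((v 2) + 1) := by simp [Pi.single_apply]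
      have hUp : U v = dcolF N (v 0) (v 1) (v 2) :=
        U_eq hN h0 h1 h2 v hcube (by omega)
      have hUq : U (v + (Pi.single (2 : Fin 3) 1 : Fin 3 → ℕ)) = dcolF N (v 0) (v 1) ((v 2) + 1) := by
        rw [U_eq hN h0 h1 h2 _ (fun m => by rcases fin3cases m with rfl | rfl | rfl <;> simp [Pi.single_apply] <;> omega)
          (by rw [eq0, eq1, eq2]; omega), eq0, eq1, eq2]
      have hUr : U (v + (Pi.single (2 : Fin 3) 1 : Fin 3 → ℕ) + (Pi.single (0 : Fin 3) 1 : Fin 3 → ℕ)) = dcolF N ((v 0) + 1) (v 1) ((v 2) + 1) := by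
        rw [U_eq hN h0 h1 h2 _ (fun m => by rcases fin3cases m with rfl | rfl | rfl <;> simp [Pi.single_apply] <;> omega)
          (by rw [er0, er1, er2]; omega), er0, er1, er2]
      have c0 := hcov 0; have c1 := hcov 1; have c2 := hcov 2
      rw [hUp, hUq, hUr] at c0 c1 c2
      clear hcov hUp hUq hUr himg hhull
      simp only [dcolF] at c0 c1 c2
      split_ifs at c0 c1 c2 <;>
        first
        | exact absurd c0 (by decide)
        | exact absurd c1 (by decide)
        | exact absurd c2 (by decide)
        | (exfalso; omega)
        | contradiction
        | (left; exact finish_f v (by omega) (by omega) (by omega))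
        | (right; exact finish_f' N hN v (by omega) (by omega) (by omega))
    · -- case a = 2, b = 1
      have hk := hthird 0 (by decide) (by decide)
      have eq0 : (v + (Pi.single (2 : Fin 3) 1 : Fin 3 → ℕ)) 0 = (v 0) := by simp [Pi.single_apply]
      have eq1 : (v + (Pi.single (2 : Fin 3) 1 : Fin 3 → ℕ)) 1 = (v 1) := by simp [Pi.single_apply]
      have eq2 : (v + (Pi.single (2 : Fin 3) 1 : Fin 3 → ℕ)) 2 = ((v 2) + 1) := by simp [Pi.single_apply]
      have er0 : (v + (Pi.single (2 : Fin 3) 1 : Fin 3 → ℕ) + (Pi.single (1 : Fin 3) 1 : Fin 3 → ℕ)) 0 = (v 0) := by simp [Pi.single_apply]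
      have er1 : (v + (Pi.single (2 : Fin 3) 1 : Fin 3 → ℕ) + (Pi.single (1 : Fin 3) 1 : Fin 3 → ℕ)) 1 = ((v 1) + 1) := by simp [Pi.single_apply]
      have er2 : (v + (Pi.single (2 : Fin 3) 1 : Fin 3 → ℕ) + (Pi.single (1 : Fin 3) 1 : Fin 3 → ℕ)) 2 = ((v 2) + 1) := by simp [Pi.single_apply]
      have hUp : U v = dcolF N (v 0) (v 1) (v 2) :=
        U_eq hN h0 h1 h2 v hcube (by omega)
      have hUq : U (v + (Pi.single (2 : Fin 3) 1 : Fin 3 → ℕ)) = dcolF N (v 0) (v 1) ((v 2) + 1) := by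
        rw [U_eq hN h0 h1 h2 _ (fun m => by rcases fin3cases m with rfl | rfl | rfl <;> simp [Pi.single_apply] <;> omega)
          (by rw [eq0, eq1, eq2]; omega), eq0, eq1, eq2]
      have hUr : U (v + (Pi.single (2 : Fin 3) 1 : Fin 3 → ℕ) + (Pi.single (1 : Fin 3) 1 : Fin 3 → ℕ)) = dcolF N (v 0) ((v 1) + 1) ((v 2) + 1) := by
        rw [U_eq hN h0 h1 h2 _ (fun m => by rcases fin3cases m with rfl | rfl | rfl <;> simp [Pi.single_apply] <;> omega)
          (by rw [er0, er1, er2]; omega), er0, er1, er2]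
      have c0 := hcov 0; have c1 := hcov 1; have c2 := hcov 2
      rw [hUp, hUq, hUr] at c0 c1 c2
      clear hcov hUp hUq hUr himg hhull
      simp only [dcolF] at c0 c1 c2
      split_ifs at c0 c1 c2 <;>
        first
        | exact absurd c0 (by decide)
        | exact absurd c1 (by decide)
        | exact absurd c2 (by decide)
        | (exfalso; omega)
        | contradiction
        | (left; exact finish_f v (by omega) (by omega) (by omega))
        | (right; exact finish_f' N hN v (by omega) (by omega) (by omega))

  · rintro (rfl | rfl)
    · refine ⟨?_, ?_⟩
      · unfold IsBoundaryTriangle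
        have g1 : (![0,0,0] : Fin 3 → ℕ) + Pi.single 0 1 = ![1,0,0] := by
          funext i; fin_cases i <;> simp [Pi.single_apply]
        have g2 : (![1,0,0] : Fin 3 → ℕ) + Pi.single 2 1 = ![1,0,1] := by
          funext i; fin_cases i <;> simp [Pi.single_apply]
        refine ⟨![0,0,0], fun i => by fin_cases i <;> simp, 0, 2, by decide, by rw [g1, g2], ?_⟩
        apply subset_frontier 1 0 (Or.inl rfl)
        intro x hx
        simp only [Set.mem_insert_iff, Set.mem_singleton_iff] at hx
        rcases hx with rfl | rfl | rfl
        · exact ⟨fun i => by fin_cases i <;> simp, by simp⟩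
        · exact ⟨fun i => by fin_cases i <;> simp <;> omega, by simp⟩
        · exact ⟨fun i => by fin_cases i <;> simp <;> omega, by simp⟩
      · apply Set.eq_univ_of_forall
        intro t; fin_cases t
        · exact ⟨![0,0,0], by simp,
            h0 _ (mem_dob0 hN (fun m => by fin_cases m <;> simp) (by simp))⟩
        · exact ⟨![1,0,1], by simp,
            h1 _ (mem_dob1 hN (fun m => by fin_cases m <;> simp <;> omega) (by simp <;> omega))⟩
        · exact ⟨![1,0,0], by simp,
            h2 _ (mem_dob2 hN (fun m => by fin_cases m <;> simp <;> omega) (by simp <;> omega))⟩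
    · refine ⟨?_, ?_⟩
      · unfold IsBoundaryTriangle
        have g1 : (![N,N-1,N-1] : Fin 3 → ℕ) + Pi.single 2 1 = ![N,N-1,N] := by
          funext i; fin_cases i <;> simp [Pi.single_apply] <;> omega
        have g2 : (![N,N-1,N] : Fin 3 → ℕ) + Pi.single 1 1 = ![N,N,N] := by
          funext i; fin_cases i <;> simp [Pi.single_apply] <;> omega
        refine ⟨![N,N-1,N-1], fun i => by fin_cases i <;> simp <;> omega, 2, 1, by decide,
          ?_, ?_⟩
        · rw [g1, g2]
          ext x
          simp only [Set.mem_insert_iff, Set.mem_singleton_iff]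
          tauto
        · apply subset_frontier 0 N (Or.inr rfl)
          intro x hx
          simp only [Set.mem_insert_iff, Set.mem_singleton_iff] at hx
          rcases hx with rfl | rfl | rfl
          · exact ⟨fun i => by fin_cases i <;> simp <;> omega, by simp⟩
          · exact ⟨fun i => by fin_cases i <;> simp <;> omega, by simp⟩
          · exact ⟨fun i => by fin_cases i <;> simp <;> omega, by simp⟩
      · apply Set.eq_univ_of_forall
        intro t; fin_cases t
        · exact ⟨![N,N,N], by simp,
            h0 _ (mem_dob0 hN (fun m => by fin_cases m <;> simp <;> omega) (by simp))⟩
        · exact ⟨![N,N-1,N], by simp,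
            h1 _ (mem_dob1 hN (fun m => by fin_cases m <;> simp <;> omega) (by simp <;> omega))⟩
        · exact ⟨![N,N-1,N-1], by simp,
            h2 _ (mem_dob2 hN (fun m => by fin_cases m <;> simp <;> omega) (by simp <;> omega))⟩
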